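/- arXiv:2107.08327 — 5 statements merged into one kernel-verified Lean document; each statement's English description precedes it below -/
import Mathlib

section
/- Let A be a supercommutative ring and v an odd derivation of A with v∘v = 0. If there exists an odd element θ ∈ A with v(θ) = 1, then every element a ∈ A can be written uniquely as a = b + cθ with b, c ∈ ker(v); that is, the natural ring homomorphism (ker v)[θ] → A (with θ an odd polynomial variable) is an isomorphism. -/
/-- A supercommutative ring: a ring `A` with a `ℤ/2`-grading `A = ev ⊕ odd`
such that even elements are central, odd elements anticommute and square to zero. -/
class SuperGrading (A : Type*) [Ring A] where
  ev : AddSubgroup A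
  odd : AddSubgroup A
  one_mem_ev : (1 : A) ∈ ev
  decomp : ∀ a : A, ∃ a₀ ∈ ev, ∃ a₁ ∈ odd, a = a₀ + a₁
  decomp_unique : ∀ a₀ ∈ ev, ∀ a₁ ∈ odd, a₀ + a₁ = 0 → a₀ = 0 ∧ a₁ = 0
  mul_ev_ev : ∀ a ∈ ev, ∀ b ∈ ev, a * b ∈ ev
  mul_ev_odd : ∀ a ∈ ev, ∀ b ∈ odd, a * b ∈ odd
  mul_odd_ev : ∀ a ∈ odd, ∀ b ∈ ev, a * b ∈ odd
  mul_odd_odd : ∀ a ∈ odd, ∀ b ∈ odd, a * b ∈ ev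
  comm_ev_ev : ∀ a ∈ ev, ∀ b ∈ ev, a * b = b * a
  comm_ev_odd : ∀ a ∈ ev, ∀ b ∈ odd, a * b = b * a
  anticomm_odd : ∀ a ∈ odd, ∀ b ∈ odd, a * b = -(b * a)
  odd_sq : ∀ a ∈ odd, a * a = 0

open SuperGrading

/-- An odd derivation of a supercommutative ring, with square zero. -/
structure OddDer (A : Type*) [Ring A] [SuperGrading A] where
  v : A → A
  map_add : ∀ a b : A, v (a + b) = v a + v b
  map_ev : ∀ a ∈ ev (A := A), v a ∈ odd (A := A)
  map_odd : ∀ a ∈ odd (A := A), v a ∈ ev (A := A)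
  leib_ev : ∀ a ∈ ev (A := A), ∀ b : A, v (a * b) = v a * b + a * v b
  leib_odd : ∀ a ∈ odd (A := A), ∀ b : A, v (a * b) = v a * b - a * v b
  sq_zero : ∀ a : A, v (v a) = 0

/-!
Leibniz gives `v (θ a) = a - θ v a`, and moving `θ` past the homogeneous parts of `v a` by the
sign rule turns `θ v a` into `v (a₁ - a₀) θ`; as `v² = 0`, both `v (θ a)` and `v (a₁ - a₀)` lie in
`ker v`. Conversely, for `c ∈ ker v` the Leibniz rule gives `v (c θ) = c₀ - c₁`, so applying `v`
to `b + c θ = 0` with `b, c ∈ ker v` forces `c = 0`, hence `b = 0`.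
-/

namespace SuperGrading

variable {A : Type*} [Ring A] [SuperGrading A]

theorem add_eq_zero_iff {x₀ x₁ : A} (h₀ : x₀ ∈ ev (A := A)) (h₁ : x₁ ∈ odd (A := A)) :
    x₀ + x₁ = 0 ↔ x₀ = 0 ∧ x₁ = 0 :=
  ⟨decomp_unique x₀ h₀ x₁ h₁, fun ⟨hx₀, hx₁⟩ => by rw [hx₀, hx₁, add_zero]⟩

theorem sub_eq_zero_iff {x₀ x₁ : A} (h₀ : x₀ ∈ ev (A := A)) (h₁ : x₁ ∈ odd (A := A)) :
    x₀ - x₁ = 0 ↔ x₀ = 0 ∧ x₁ = 0 := by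
  rw [sub_eq_add_neg, add_eq_zero_iff h₀ (neg_mem h₁), neg_eq_zero]

end SuperGrading

namespace OddDer

variable {A : Type*} [Ring A] [SuperGrading A] (D : OddDer A)

def toAddMonoidHom : A →+ A := AddMonoidHom.mk' D.v D.map_add

theorem map_zero : D.v 0 = 0 :=
  D.toAddMonoidHom.map_zero

theorem map_sub (x y : A) : D.v (x - y) = D.v x - D.v y :=
  D.toAddMonoidHom.map_sub x y

theorem map_eq_zero_of_add {x₀ x₁ : A} (h₀ : x₀ ∈ ev (A := A)) (h₁ : x₁ ∈ odd (A := A))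
    (h : D.v (x₀ + x₁) = 0) : D.v x₀ = 0 ∧ D.v x₁ = 0 := by
  rw [D.map_add, add_comm] at h
  exact ((SuperGrading.add_eq_zero_iff (D.map_odd x₁ h₁) (D.map_ev x₀ h₀)).mp h).symm

theorem mul_map_add_eq_map_sub_mul {θ : A} (hθ : θ ∈ odd (A := A)) {x₀ x₁ : A}
    (h₀ : x₀ ∈ ev (A := A)) (h₁ : x₁ ∈ odd (A := A)) : θ * D.v (x₀ + x₁) = D.v (x₁ - x₀) * θ := by
  rw [D.map_add, D.map_sub, mul_add, sub_mul, anticomm_odd θ hθ _ (D.map_ev x₀ h₀),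
    comm_ev_odd _ (D.map_odd x₁ h₁) θ hθ]
  abel

theorem map_mul_of_map_eq_one {θ : A} (hθ : θ ∈ odd (A := A)) (hvθ : D.v θ = 1) (a : A) :
    D.v (θ * a) = a - θ * D.v a := by
  rw [D.leib_odd θ hθ a, hvθ, one_mul]

theorem eq_map_mul_add {θ : A} (hθ : θ ∈ odd (A := A)) (hvθ : D.v θ = 1) {a₀ a₁ : A}
    (h₀ : a₀ ∈ ev (A := A)) (h₁ : a₁ ∈ odd (A := A)) :
    a₀ + a₁ = D.v (θ * (a₀ + a₁)) + D.v (a₁ - a₀) * θ := by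
  rw [D.map_mul_of_map_eq_one hθ hvθ, D.mul_map_add_eq_map_sub_mul hθ h₀ h₁, sub_add_cancel]

theorem map_add_mul_eq_sub {θ : A} (hvθ : D.v θ = 1) {c₀ c₁ : A} (h₀ : c₀ ∈ ev (A := A))
    (h₁ : c₁ ∈ odd (A := A)) (hc : D.v (c₀ + c₁) = 0) : D.v ((c₀ + c₁) * θ) = c₀ - c₁ := by
  obtain ⟨hvc₀, hvc₁⟩ := D.map_eq_zero_of_add h₀ h₁ hc
  rw [add_mul, D.map_add, D.leib_ev c₀ h₀ θ, D.leib_odd c₁ h₁ θ, hvc₀, hvc₁, hvθ]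
  simp only [zero_mul, mul_one, zero_add, sub_eq_add_neg]

theorem eq_zero_of_add_mul_eq_zero {θ : A} (hvθ : D.v θ = 1) {b c : A} (hb : D.v b = 0)
    (hc : D.v c = 0) (h : b + c * θ = 0) : b = 0 ∧ c = 0 := by
  obtain ⟨c₀, h₀, c₁, h₁, rfl⟩ := decomp c
  have hvcθ : D.v ((c₀ + c₁) * θ) = 0 := by
    rw [← add_sub_cancel_left b ((c₀ + c₁) * θ), D.map_sub, h, hb, D.map_zero, sub_zero]
  rw [D.map_add_mul_eq_sub hvθ h₀ h₁ hc] at hvcθ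
  obtain ⟨rfl, rfl⟩ := (SuperGrading.sub_eq_zero_iff h₀ h₁).mp hvcθ
  rw [add_zero, zero_mul, add_zero] at h
  exact ⟨h, add_zero 0⟩

end OddDer

/-- if `v θ = 1` for an odd `θ`, every element of `A` is uniquely
of the form `b + c * θ` with `b, c ∈ ker v`, i.e. `(ker v)[θ] ≅ A`. -/
theorem stmt0 {A : Type*} [Ring A] [SuperGrading A] (D : OddDer A)
    (θ : A) (hθ : θ ∈ odd (A := A)) (hvθ : D.v θ = 1) :
    ∀ a : A, ∃! p : A × A, D.v p.1 = 0 ∧ D.v p.2 = 0 ∧ a = p.1 + p.2 * θ := by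
  intro a
  obtain ⟨a₀, h₀, a₁, h₁, rfl⟩ := decomp a
  refine ⟨(D.v (θ * (a₀ + a₁)), D.v (a₁ - a₀)),
    ⟨D.sq_zero _, D.sq_zero _, D.eq_map_mul_add hθ hvθ h₀ h₁⟩, ?_⟩
  rintro ⟨b, c⟩ ⟨hb, hc, hbc⟩
  have hdiff : (b - D.v (θ * (a₀ + a₁))) + (c - D.v (a₁ - a₀)) * θ = 0 := by
    rw [sub_mul, sub_add_sub_comm, ← hbc, ← D.eq_map_mul_add hθ hvθ h₀ h₁, sub_self]
  obtain ⟨hb', hc'⟩ := D.eq_zero_of_add_mul_eq_zero hvθ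
    (by rw [D.map_sub, hb, D.sq_zero, sub_zero]) (by rw [D.map_sub, hc, D.sq_zero, sub_zero]) hdiff
  exact Prod.ext (sub_eq_zero.mp hb') (sub_eq_zero.mp hc')
end

section
/- Let A be a supercommutative ring, v an odd derivation with v² = 0, and θ an odd element with v(θ) = 1. If A is finitely generated as an algebra over a subring C ⊆ ker(v), then ker(v) is finitely generated as an algebra over C. -/
open SuperGrading

theorem RingHom.mem_closure_union_image_of_eqOn {R : Type*} [Ring R] (f : R →+* R)
    {C : Subring R} (hC : ∀ c ∈ C, f c = c) {s : Set R}
    (hs : Subring.closure ((C : Set R) ∪ s) = ⊤) (a : R) :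
    f a ∈ Subring.closure ((C : Set R) ∪ f '' s) := by
  have ha : f a ∈ (Subring.closure ((C : Set R) ∪ s)).map f :=
    Subring.mem_map.mpr ⟨a, hs ▸ Subring.mem_top a, rfl⟩
  rw [RingHom.map_closure, Set.image_union] at ha
  refine Subring.closure_mono (Set.union_subset_union_left _ ?_) ha
  rintro _ ⟨c, hc, rfl⟩
  rwa [hC c hc]

namespace SuperGrading

variable {A : Type*} [Ring A] [SuperGrading A] {θ : A}

theorem commute_odd_ev (hθ : θ ∈ odd (A := A)) {a : A} (ha : a ∈ ev (A := A)) :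
    θ * a = a * θ :=
  (comm_ev_odd a ha θ hθ).symm

theorem anticommute_odd_odd (hθ : θ ∈ odd (A := A)) {a : A} (ha : a ∈ odd (A := A)) :
    θ * a = -(a * θ) :=
  anticomm_odd θ hθ a ha

theorem odd_mul_mul_self_eq_zero (hθ : θ ∈ odd (A := A)) (a : A) : θ * a * θ = 0 := by
  obtain ⟨a₀, h₀, a₁, h₁, rfl⟩ := decomp a
  have hθθ : θ * θ = 0 := odd_sq θ hθ
  calc θ * (a₀ + a₁) * θ = θ * a₀ * θ + θ * a₁ * θ := by noncomm_ring
    _ = a₀ * (θ * θ) - a₁ * (θ * θ) := by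
        rw [commute_odd_ev hθ h₀, anticommute_odd_odd hθ h₁]; noncomm_ring
    _ = 0 := by rw [hθθ]; noncomm_ring

end SuperGrading

namespace OddDer

variable {A : Type*} [Ring A] [SuperGrading A] (D : OddDer A) {θ : A}

theorem map_one : D.v 1 = 0 := by
  have h := D.leib_ev 1 one_mem_ev 1
  rw [one_mul, one_mul, mul_one] at h
  exact right_eq_add.mp h

theorem odd_mul_map_mul (hθ : θ ∈ odd (A := A)) (a b : A) :
    θ * D.v (a * b) = θ * D.v a * b + a * (θ * D.v b) := by
  obtain ⟨a₀, h₀, a₁, h₁, rfl⟩ := decomp a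
  rw [add_mul, D.map_add, D.leib_ev a₀ h₀ b, D.leib_odd a₁ h₁ b, D.map_add]
  calc θ * (D.v a₀ * b + a₀ * D.v b + (D.v a₁ * b - a₁ * D.v b))
      = θ * D.v a₀ * b + θ * D.v a₁ * b + θ * a₀ * D.v b - θ * a₁ * D.v b := by
        noncomm_ring
    _ = θ * (D.v a₀ + D.v a₁) * b + (a₀ + a₁) * (θ * D.v b) := by
        rw [SuperGrading.commute_odd_ev hθ h₀, SuperGrading.anticommute_odd_odd hθ h₁]
        noncomm_ring

def homotopyProj (hθ : θ ∈ odd (A := A)) : A →+* A :=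
  RingHom.mk'
    { toFun := fun a => a - θ * D.v a
      map_one' := by simp only [D.map_one, mul_zero, sub_zero]
      map_mul' := fun a b => by
        have hsq : θ * D.v a * (θ * D.v b) = 0 := by
          rw [← mul_assoc, SuperGrading.odd_mul_mul_self_eq_zero hθ, zero_mul]
        calc a * b - θ * D.v (a * b)
            = a * b - (θ * D.v a * b + a * (θ * D.v b)) + θ * D.v a * (θ * D.v b) := by
              rw [D.odd_mul_map_mul hθ, hsq, add_zero]
          _ = (a - θ * D.v a) * (b - θ * D.v b) := by noncomm_ring }
    fun a b => by simp only [MonoidHom.coe_mk, OneHom.coe_mk, D.map_add, mul_add]; abel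

theorem homotopyProj_apply (hθ : θ ∈ odd (A := A)) (a : A) :
    D.homotopyProj hθ a = a - θ * D.v a :=
  rfl

theorem homotopyProj_of_map_eq_zero (hθ : θ ∈ odd (A := A)) {a : A} (ha : D.v a = 0) :
    D.homotopyProj hθ a = a := by
  rw [homotopyProj_apply, ha, mul_zero, sub_zero]

theorem map_homotopyProj (hθ : θ ∈ odd (A := A)) (hvθ : D.v θ = 1) (a : A) :
    D.v (D.homotopyProj hθ a) = 0 := by
  rw [homotopyProj_apply]
  have hvθa : D.v (θ * D.v a) = D.v a := by
    rw [D.leib_odd θ hθ, hvθ, one_mul, D.sq_zero, mul_zero, sub_zero]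
  have h := D.map_add (a - θ * D.v a) (θ * D.v a)
  rw [sub_add_cancel, hvθa] at h
  exact right_eq_add.mp h

end OddDer

/-- if `v θ = 1` for an odd `θ` and `A` is finitely generated as an
algebra over a subring `C ⊆ ker v`, then `ker v` is finitely generated over `C`. -/
theorem stmt1 {A : Type*} [Ring A] [SuperGrading A] (D : OddDer A)
    (θ : A) (hθ : θ ∈ odd (A := A)) (hvθ : D.v θ = 1)
    (C : Subring A) (hC : ∀ c ∈ C, D.v c = 0)
    (s : Finset A) (hs : Subring.closure ((C : Set A) ∪ (s : Set A)) = ⊤) :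
    ∃ t : Finset A, (∀ x ∈ t, D.v x = 0) ∧
      ∀ a : A, D.v a = 0 → a ∈ Subring.closure ((C : Set A) ∪ (t : Set A)) := by
  classical
  let P := D.homotopyProj hθ
  refine ⟨s.image P, ?_, fun a ha => ?_⟩
  · exact Finset.forall_mem_image.mpr fun y _ => D.map_homotopyProj hθ hvθ y
  · rw [Finset.coe_image, ← D.homotopyProj_of_map_eq_zero hθ ha]
    exact P.mem_closure_union_image_of_eqOn
      (fun c hc => D.homotopyProj_of_map_eq_zero hθ (hC c hc)) hs a
end

section
/- Let A be a supercommutative ring and v an odd derivation of A with v² = 0. If there exist elements a₁,…,aₙ, b₁,…,bₙ in A (with aᵢ and bᵢ of opposite parity) such that Σᵢ aᵢ v(bᵢ) = 1, then there exists an odd element θ ∈ A with v(θ) invertible. -/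
open SuperGrading

/-!
Each term `aᵢ v(bᵢ)` is `v` of an odd element modulo a product of two odd elements: if `aᵢ` is
even, `aᵢ v(bᵢ) = v(aᵢ bᵢ) - v(aᵢ) bᵢ` by the Leibniz rule; if `aᵢ` is odd, `aᵢ v(bᵢ)` is
already such a product. Summing, `v θ = 1 - x` for `θ = ∑ aᵢ bᵢ` (over the even `aᵢ`), where
`x` is a sum of products of two odd elements. These products are even, hence central, and square
to zero, so `x` is nilpotent and `1 - x` is a unit.
-/

namespace SuperGrading

variable {A : Type*} [Ring A] [SuperGrading A]

theorem mul_odd_odd_mul_self {p q : A} (hp : p ∈ odd (A := A)) (hq : q ∈ odd (A := A)) :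
    (p * q) * (p * q) = 0 := by
  calc (p * q) * (p * q) = p * (q * p) * q := by noncomm_ring
    _ = -((p * p) * (q * q)) := by rw [anticomm_odd _ hq _ hp]; noncomm_ring
    _ = 0 := by rw [odd_sq _ hp, zero_mul, neg_zero]

theorem isNilpotent_sum_mul_odd {ι : Type*} (s : Finset ι) {p q : ι → A}
    (hp : ∀ i, p i ∈ odd (A := A)) (hq : ∀ i, q i ∈ odd (A := A)) :
    IsNilpotent (∑ i ∈ s, p i * q i) :=
  Commute.isNilpotent_sum
    (fun i _ => ⟨2, by rw [pow_two, mul_odd_odd_mul_self (hp i) (hq i)]⟩)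
    (fun i j _ _ => comm_ev_ev _ (mul_odd_odd _ (hp i) _ (hq i)) _ (mul_odd_odd _ (hp j) _ (hq j)))

end SuperGrading

namespace OddDer

variable {A : Type*} [Ring A] [SuperGrading A] (D : OddDer A)

theorem map_sum {ι : Type*} (s : Finset ι) (f : ι → A) :
    D.v (∑ i ∈ s, f i) = ∑ i ∈ s, D.v (f i) :=
  _root_.map_sum D.toAddMonoidHom f s

theorem exists_mul_eq_add_mul_odd {a b : A}
    (hab : (a ∈ ev (A := A) ∧ b ∈ odd (A := A)) ∨ (a ∈ odd (A := A) ∧ b ∈ ev (A := A))) :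
    ∃ t p q : A, t ∈ odd (A := A) ∧ p ∈ odd (A := A) ∧ q ∈ odd (A := A) ∧
      a * D.v b = D.v t + p * q := by
  rcases hab with ⟨ha, hb⟩ | ⟨ha, hb⟩
  · refine ⟨a * b, -D.v a, b, mul_ev_odd _ ha _ hb, neg_mem (D.map_ev _ ha), hb, ?_⟩
    rw [D.leib_ev _ ha]
    noncomm_ring
  · exact ⟨0, a, D.v b, zero_mem _, ha, D.map_ev _ hb, by rw [D.map_zero, zero_add]⟩

end OddDer

/-- if `∑ aᵢ v(bᵢ) = 1` with `aᵢ, bᵢ` of opposite parity, then there is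
an odd `θ` with `v θ` invertible. -/
theorem stmt2 {A : Type*} [Ring A] [SuperGrading A] (D : OddDer A)
    (n : ℕ) (a b : Fin n → A)
    (hab : ∀ i, (a i ∈ ev (A := A) ∧ b i ∈ odd (A := A)) ∨
                  (a i ∈ odd (A := A) ∧ b i ∈ ev (A := A)))
    (hsum : ∑ i, a i * D.v (b i) = 1) :
    ∃ θ ∈ odd (A := A), IsUnit (D.v θ) := by
  choose t p q ht hp hq hterm using fun i => D.exists_mul_eq_add_mul_odd (hab i)
  refine ⟨∑ i, t i, sum_mem fun i _ => ht i, ?_⟩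
  have hvθ : D.v (∑ i, t i) = 1 - ∑ i, p i * q i := by
    rw [← hsum, D.map_sum]
    simp only [hterm, Finset.sum_add_distrib]
    abel
  rw [hvθ]
  exact (isNilpotent_sum_mul_odd _ hp hq).isUnit_one_sub
end

section
/- Let k be a field and v the odd derivation v = θ ∂_z on A = k[z, θ] (z even, θ odd with θ² = 0), i.e., v(z) = θ, v(θ) = 0. Then ker(v) = k + θ·k[z] as a k-subalgebra of A, and this subalgebra is not finitely generated as a k-algebra. -/
/-!
An element `p + θ q` is killed by `v = θ ∂_z` iff `p' = 0`, i.e. (in characteristic `0`) iff `p`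
is constant. Since `θ² = 0`, the product of `c + θ q` and `c' + θ q'` is `c c' + θ (c q' + c' q)`,
so the elements `c + θ q` with `deg q ≤ N` form a subalgebra. A finite subset of the kernel lies
in one of these for large `N`, hence so does the subalgebra it generates; but `θ z^(N+1)` is in
the kernel and not in it.
-/

open Polynomial TrivSqZeroExt

/-- The superalgebra `A = k[z,θ]` (`z` even, `θ` odd, `θ² = 0`), realized as the
trivial square-zero extension of `k[z]` by `k[z]` (second coordinate = coefficient
of `θ`). -/
abbrev SuperAff (k : Type*) [Field k] : Type _ :=
  TrivSqZeroExt (Polynomial k) (Polynomial k)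

/-- The odd derivation `v = θ ∂_z`: `v(p + θ q) = θ p'`. -/
noncomputable def vField (k : Type*) [Field k] : SuperAff k → SuperAff k :=
  fun a => TrivSqZeroExt.inr (Polynomial.derivative a.fst)

namespace Polynomial

variable (R : Type*) [CommSemiring R]

def constAddThetaDegreeLE (N : ℕ) : Subalgebra R (TrivSqZeroExt R[X] R[X]) where
  carrier := {a | a.fst.natDegree = 0 ∧ a.snd.natDegree ≤ N}
  mul_mem' := by
    rintro a b ⟨ha₁, ha₂⟩ ⟨hb₁, hb₂⟩
    rw [Set.mem_ofPred_eq, fst_mul, snd_mul, smul_eq_mul, op_smul_eq_mul]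
    exact ⟨Nat.eq_zero_of_le_zero <| natDegree_mul_le.trans (by omega),
      (natDegree_add_le _ _).trans <|
        max_le (natDegree_mul_le.trans (by omega)) (natDegree_mul_le.trans (by omega))⟩
  add_mem' := by
    rintro a b ⟨ha₁, ha₂⟩ ⟨hb₁, hb₂⟩
    rw [Set.mem_ofPred_eq, fst_add, snd_add]
    exact ⟨Nat.eq_zero_of_le_zero <| (natDegree_add_le _ _).trans (by omega),
      (natDegree_add_le _ _).trans (by omega)⟩
  algebraMap_mem' c := by simp [algebraMap_eq_inl']

end Polynomial

section

variable {k : Type*} [Field k]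

theorem vField_eq_zero_iff (a : SuperAff k) : vField k a = 0 ↔ derivative a.fst = 0 := by
  simp [vField, TrivSqZeroExt.ext_iff]

theorem vField_eq_zero_iff_natDegree_fst [CharZero k] (a : SuperAff k) :
    vField k a = 0 ↔ a.fst.natDegree = 0 := by
  rw [vField_eq_zero_iff, derivative_eq_zero]

theorem vField_inr (q : k[X]) : vField k (inr q) = 0 := by
  simp [vField_eq_zero_iff]

theorem vField_eq_zero_iff_exists [CharZero k] (a : SuperAff k) :
    vField k a = 0 ↔ ∃ (c : k) (q : k[X]), a = algebraMap k (SuperAff k) c + inr q := by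
  rw [vField_eq_zero_iff_natDegree_fst]
  constructor
  · intro h
    refine ⟨a.fst.coeff 0, a.snd, ?_⟩
    rw [algebraMap_eq_inl', Polynomial.algebraMap_eq, ← eq_C_of_natDegree_eq_zero h,
      inl_fst_add_inr_snd_eq]
  · rintro ⟨c, q, rfl⟩
    simp [algebraMap_eq_inl']

theorem adjoin_le_constAddThetaDegreeLE [CharZero k] {s : Finset (SuperAff k)}
    (hs : ∀ x ∈ s, vField k x = 0) :
    Algebra.adjoin k (s : Set (SuperAff k)) ≤
      constAddThetaDegreeLE k (s.sup fun x => x.snd.natDegree) :=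
  Algebra.adjoin_le fun x hx =>
    ⟨(vField_eq_zero_iff_natDegree_fst x).1 (hs x hx),
      Finset.le_sup (f := fun x => x.snd.natDegree) hx⟩

end

/-- for `v = θ ∂_z` on `A = k[z,θ]` (char 0), the kernel of `v` is
`k + θ·k[z]`, and this subalgebra is not finitely generated as a `k`-algebra. -/
theorem stmt16 (k : Type*) [Field k] [CharZero k] :
    (∀ a : SuperAff k, vField k a = 0 ↔
      ∃ (c : k) (q : Polynomial k),
        a = algebraMap k (SuperAff k) c + TrivSqZeroExt.inr q) ∧
    ¬ ∃ s : Finset (SuperAff k),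
        (∀ x ∈ s, vField k x = 0) ∧
        ∀ a : SuperAff k, vField k a = 0 →
          a ∈ Algebra.adjoin k (s : Set (SuperAff k)) := by
  refine ⟨vField_eq_zero_iff_exists, ?_⟩
  rintro ⟨s, hs, hgen⟩
  set N := s.sup fun x => x.snd.natDegree
  have hmem := adjoin_le_constAddThetaDegreeLE hs (hgen (inr (X ^ (N + 1))) (vField_inr _))
  have hdeg : (X ^ (N + 1) : k[X]).natDegree ≤ N := hmem.2
  rw [natDegree_X_pow] at hdeg
  omega
end

section
/- Let A be a supercommutative ring and let 0 → A → V → M → 0 be an extension of A-modules where M is free of rank 1 on an odd generator (rank 0|1). Then there is a unique structure of supercommutative A-algebra on V with unit the image of 1 ∈ A, such that the multiplication map V × V → V restricted to lifts of M lands in A, the induced A-module structure on M agrees with the given one, and s² = 0 for every odd element s of V. Locally (when the extension splits with odd splitting θ), this algebra is A[θ] with θ² = 0. -/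
open SuperGrading

/-- The conditions characterizing the supercommutative `A`-algebra structure on the
extension `V = A ⊕ A·θ` of the free rank-`0|1` module by `A` (an element `(a, b)`
stands for `a + bθ`): biadditivity, associativity, unit `1 = (1,0)`, compatibility
with the `A`-module structure, supercommutativity, and `s² = 0` for odd `s`. -/
def GoodMul {A : Type*} [Ring A] [SuperGrading A]
    (mul : A × A → A × A → A × A) : Prop :=
  (∀ x y z : A × A, mul (x + y) z = mul x z + mul y z) ∧
  (∀ x y z : A × A, mul x (y + z) = mul x y + mul x z) ∧
  (∀ x y z : A × A, mul (mul x y) z = mul x (mul y z)) ∧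
  (∀ x : A × A, mul (1, 0) x = x) ∧
  (∀ x : A × A, mul x (1, 0) = x) ∧
  (∀ a a' b' : A, mul (a, 0) (a', b') = (a * a', a * b')) ∧
  (∀ x y : A × A, (x.1 ∈ ev (A := A) ∧ x.2 ∈ odd (A := A)) → mul x y = mul y x) ∧
  (∀ x y : A × A, (x.1 ∈ odd (A := A) ∧ x.2 ∈ ev (A := A)) →
      (y.1 ∈ odd (A := A) ∧ y.2 ∈ ev (A := A)) → mul x y = -(mul y x)) ∧
  (∀ x : A × A, (x.1 ∈ odd (A := A) ∧ x.2 ∈ ev (A := A)) → mul x x = 0)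

/-!
Splitting every element into its even and odd parts gives the grade involution `σ`, a ring
automorphism fixing `ev` and negating `odd`; supercommutativity reads `b * σ a = a * b` for
odd `b`. On `A × A` the product `(a, b)(a', b') = (a a', a b' + b σ(a'))` is that of
`A[θ]/(θ²)` with `θ = (0, 1)` odd, and it satisfies all the required conditions.
Conversely, for any such product `θ` commutes with even and anticommutes with odd scalars,
so `θ a' = σ(a') θ`, and `θ² = 0` because `θ` is odd; since `(a, b) = a + b θ`,
bilinearity and associativity then force the formula above.
-/

namespace SuperGrading

variable {A : Type*} [Ring A] [SuperGrading A]

noncomputable def evenPart (a : A) : A := (decomp a).choose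

theorem evenPart_mem_ev (a : A) : evenPart a ∈ ev (A := A) := (decomp a).choose_spec.1

theorem sub_evenPart_mem_odd (a : A) : a - evenPart a ∈ odd (A := A) := by
  obtain ⟨a₁, ha₁, h⟩ := (decomp a).choose_spec.2
  rwa [← sub_eq_iff_eq_add'.mpr h] at ha₁

theorem evenPart_eq {a x y : A} (hx : x ∈ ev (A := A)) (hy : y ∈ odd (A := A))
    (h : a = x + y) : evenPart a = x := by
  have hsum : (evenPart a - x) + ((a - evenPart a) - y) = 0 := by rw [h]; abel
  exact sub_eq_zero.mp (decomp_unique _ (sub_mem (evenPart_mem_ev a) hx)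
    _ (sub_mem (sub_evenPart_mem_odd a) hy) hsum).1

theorem evenPart_of_mem_ev {a : A} (ha : a ∈ ev (A := A)) : evenPart a = a :=
  evenPart_eq ha (zero_mem _) (add_zero a).symm

theorem evenPart_of_mem_odd {a : A} (ha : a ∈ odd (A := A)) : evenPart a = 0 :=
  evenPart_eq (zero_mem _) ha (zero_add a).symm

theorem evenPart_add (a b : A) : evenPart (a + b) = evenPart a + evenPart b :=
  evenPart_eq (add_mem (evenPart_mem_ev a) (evenPart_mem_ev b))
    (add_mem (sub_evenPart_mem_odd a) (sub_evenPart_mem_odd b)) (by abel)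

theorem evenPart_mul (a b : A) :
    evenPart (a * b) = evenPart a * evenPart b + (a - evenPart a) * (b - evenPart b) :=
  evenPart_eq
    (add_mem (mul_ev_ev _ (evenPart_mem_ev a) _ (evenPart_mem_ev b))
      (mul_odd_odd _ (sub_evenPart_mem_odd a) _ (sub_evenPart_mem_odd b)))
    (add_mem (mul_ev_odd _ (evenPart_mem_ev a) _ (sub_evenPart_mem_odd b))
      (mul_odd_ev _ (sub_evenPart_mem_odd a) _ (evenPart_mem_ev b)))
    (by noncomm_ring)

noncomputable def gradeInvolution : A →+* A where
  toFun a := evenPart a - (a - evenPart a)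
  map_one' := by rw [evenPart_of_mem_ev one_mem_ev]; abel
  map_mul' a b := by rw [evenPart_mul]; noncomm_ring
  map_zero' := by rw [evenPart_of_mem_ev (zero_mem _)]; abel
  map_add' a b := by rw [evenPart_add]; abel

theorem gradeInvolution_apply (a : A) :
    gradeInvolution a = evenPart a - (a - evenPart a) := rfl

theorem gradeInvolution_of_mem_ev {a : A} (ha : a ∈ ev (A := A)) : gradeInvolution a = a := by
  rw [gradeInvolution_apply, evenPart_of_mem_ev ha]; abel

theorem gradeInvolution_of_mem_odd {a : A} (ha : a ∈ odd (A := A)) :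
    gradeInvolution a = -a := by
  rw [gradeInvolution_apply, evenPart_of_mem_odd ha]; abel

theorem mul_comm_of_mem_ev {a : A} (ha : a ∈ ev (A := A)) (b : A) : a * b = b * a := by
  have hb : b = evenPart b + (b - evenPart b) := by abel
  rw [hb, mul_add, add_mul, comm_ev_ev _ ha _ (evenPart_mem_ev b),
    comm_ev_odd _ ha _ (sub_evenPart_mem_odd b)]

theorem mul_gradeInvolution_of_mem_odd {b : A} (hb : b ∈ odd (A := A)) (a : A) :
    b * gradeInvolution a = a * b := by
  have ha : a = evenPart a + (a - evenPart a) := by abel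
  conv_rhs => rw [ha, add_mul, comm_ev_odd _ (evenPart_mem_ev a) _ hb,
    anticomm_odd _ (sub_evenPart_mem_odd a) _ hb]
  rw [gradeInvolution_apply]; noncomm_ring

/-- The product of `A[θ]/(θ²)` with `θ = (0, 1)` odd, `(a, b)` standing for `a + b θ`. -/
noncomputable def superDualMul (x y : A × A) : A × A :=
  (x.1 * y.1, x.1 * y.2 + x.2 * gradeInvolution y.1)

theorem goodMul_superDualMul : GoodMul (superDualMul (A := A)) := by
  refine ⟨?addLeft, ?addRight, ?assoc, ?oneLeft, ?oneRight, ?scalar, ?commEven, ?anticommOdd,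
    ?sqOdd⟩
  case addLeft =>
    intro x y z
    simp only [superDualMul, Prod.fst_add, Prod.snd_add, Prod.mk_add_mk, Prod.mk.injEq]
    constructor <;> noncomm_ring
  case addRight =>
    intro x y z
    simp only [superDualMul, Prod.fst_add, Prod.snd_add, Prod.mk_add_mk, map_add,
      Prod.mk.injEq]
    constructor <;> noncomm_ring
  case assoc =>
    intro x y z
    simp only [superDualMul, map_mul, Prod.mk.injEq]
    constructor <;> noncomm_ring
  case oneLeft => intro x; simp [superDualMul]
  case oneRight => intro x; simp [superDualMul]
  case scalar => intro a a' b'; simp [superDualMul]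
  case commEven =>
    rintro x y ⟨h₁, h₂⟩
    simp only [superDualMul, gradeInvolution_of_mem_ev h₁, mul_gradeInvolution_of_mem_odd h₂,
      mul_comm_of_mem_ev h₁ y.1, mul_comm_of_mem_ev h₁ y.2, Prod.mk.injEq, true_and]
    abel
  case anticommOdd =>
    rintro x y ⟨h₁, h₂⟩ ⟨h₃, h₄⟩
    simp only [superDualMul, gradeInvolution_of_mem_odd h₁, gradeInvolution_of_mem_odd h₃,
      anticomm_odd _ h₁ _ h₃, mul_comm_of_mem_ev h₂ y.1, mul_comm_of_mem_ev h₄ x.1,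
      Prod.neg_mk, mul_neg, Prod.mk.injEq, true_and]
    abel
  case sqOdd =>
    rintro x ⟨h₁, h₂⟩
    simp only [superDualMul, gradeInvolution_of_mem_odd h₁, odd_sq _ h₁,
      mul_comm_of_mem_ev h₂ x.1, mul_neg, add_neg_cancel, Prod.mk_zero_zero]

theorem zero_mem_odd_and_one_mem_ev : (0 : A) ∈ odd (A := A) ∧ (1 : A) ∈ ev (A := A) :=
  ⟨zero_mem _, one_mem_ev⟩

end SuperGrading

namespace GoodMul

open SuperGrading

variable {A : Type*} [Ring A] [SuperGrading A] {mul : A × A → A × A → A × A}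

theorem add_mul (h : GoodMul mul) (x y z : A × A) : mul (x + y) z = mul x z + mul y z :=
  h.1 x y z

theorem mul_add (h : GoodMul mul) (x y z : A × A) : mul x (y + z) = mul x y + mul x z :=
  h.2.1 x y z

theorem mul_assoc (h : GoodMul mul) (x y z : A × A) : mul (mul x y) z = mul x (mul y z) :=
  h.2.2.1 x y z

theorem mk_zero_mul (h : GoodMul mul) (a a' b' : A) : mul (a, 0) (a', b') = (a * a', a * b') :=
  h.2.2.2.2.2.1 a a' b'

theorem mul_self_eq_zero (h : GoodMul mul) {x : A × A}
    (hx : x.1 ∈ odd (A := A) ∧ x.2 ∈ ev (A := A)) : mul x x = 0 :=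
  h.2.2.2.2.2.2.2.2 x hx

theorem mul_zero (h : GoodMul mul) (x : A × A) : mul x 0 = 0 := by
  simpa using h.mul_add x 0 0

theorem mk_zero_mul_theta (h : GoodMul mul) (b : A) : mul (b, 0) (0, 1) = (0, b) := by
  simpa using h.mk_zero_mul b 0 1

theorem theta_mul_mk_zero (h : GoodMul mul) (a : A) :
    mul (0, 1) (a, 0) = (0, gradeInvolution a) := by
  obtain ⟨-, hadd, -, -, -, hscalar, hcomm, hanti, -⟩ := h
  have heven : mul (0, 1) (evenPart a, 0) = (0, evenPart a) := by
    rw [← hcomm _ _ ⟨evenPart_mem_ev a, zero_mem _⟩, hscalar]; simp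
  have hodd : mul (0, 1) (a - evenPart a, 0) = (0, -(a - evenPart a)) := by
    rw [hanti _ _ zero_mem_odd_and_one_mem_ev ⟨sub_evenPart_mem_odd a, zero_mem _⟩, hscalar]
    simp
  have hsplit : ((a, 0) : A × A) = (evenPart a, 0) + (a - evenPart a, 0) := by simp
  rw [hsplit, hadd, heven, hodd, gradeInvolution_apply, Prod.mk_add_mk, add_zero,
    ← sub_eq_add_neg]

theorem theta_mul_zero_mk (h : GoodMul mul) (b : A) : mul (0, 1) (0, b) = 0 := by
  rw [← h.mk_zero_mul_theta b, ← h.mul_assoc, h.theta_mul_mk_zero,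
    ← h.mk_zero_mul_theta (gradeInvolution b), h.mul_assoc,
    h.mul_self_eq_zero zero_mem_odd_and_one_mem_ev, h.mul_zero]

theorem eq_superDualMul (h : GoodMul mul) : mul = superDualMul := by
  have hθ : ∀ a' b' : A, mul (0, 1) (a', b') = (0, gradeInvolution a') := by
    intro a' b'
    rw [show ((a', b') : A × A) = (a', 0) + (0, b') by simp, h.mul_add, h.theta_mul_mk_zero,
      h.theta_mul_zero_mk, add_zero]
  funext ⟨a, b⟩ ⟨a', b'⟩
  calc mul (a, b) (a', b') = mul (a, 0) (a', b') + mul (b, 0) (mul (0, 1) (a', b')) := by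
        rw [← h.mul_assoc, ← h.add_mul, h.mk_zero_mul_theta]; simp
    _ = superDualMul (a, b) (a', b') := by
        rw [hθ, h.mk_zero_mul, h.mk_zero_mul]; simp [superDualMul]

end GoodMul

open SuperGrading in
/-- on the extension `0 → A → V → ΠA → 0` with `ΠA` free of rank `0|1`
(realized as `V = A × A`, `(a,b) = a + bθ`), there is a unique supercommutative
`A`-algebra structure with unit `(1,0)` such that odd elements square to zero and the
induced module structures are the given ones; it is given by
`(a + bθ)(a' + b'θ) = aa' + (ab' + (-1)^{|a'|} b a')θ`. -/
theorem stmt18 {A : Type*} [Ring A] [SuperGrading A] :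
    (∃! mul : A × A → A × A → A × A, GoodMul mul) ∧
    (∀ mul : A × A → A × A → A × A, GoodMul mul →
      ∀ a b a' b' : A,
        (a' ∈ ev (A := A) → mul (a, b) (a', b') = (a * a', a * b' + b * a')) ∧
        (a' ∈ odd (A := A) → mul (a, b) (a', b') = (a * a', a * b' - b * a'))) := by
  refine ⟨⟨superDualMul, goodMul_superDualMul, fun _ h => h.eq_superDualMul⟩, ?_⟩
  intro mul h a b a' b'
  rw [h.eq_superDualMul]
  exact ⟨fun ha' => by rw [superDualMul, gradeInvolution_of_mem_ev ha'],
    fun ha' => by rw [superDualMul, gradeInvolution_of_mem_odd ha', mul_neg, ← sub_eq_add_neg]⟩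
end
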